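/- For differentiable ∇_θ L_S with gradients Lipschitz in θ with constant ℓ (uniformly in λ), common initialization θ₀^S = θ₀^T, and gradient mismatch bound ‖∇_θL_S(λ, θ_n^S) − ∇_θL_T(θ_n^S)‖ ≤ ε and real loss gradient ℓ-Lipschitz, the trajectories satisfy ‖θ_n^S − θ_n^T‖ ≤ ηε · ((1+ηℓ)^n − 1)/(ηℓ) for all n ≥ 0. -/
import Mathlib


/-- Quantitative trajectory stability for gradient matching: if the gradient mismatch along the
synthetic trajectory is at most `ε` and `∇L_T` is `ℓ`-Lipschitz, then
`‖θ_n^S - θ_n^T‖ ≤ ηε ((1+ηℓ)^n - 1)/(ηℓ)`. -/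
theorem gradient_matching_trajectory_bound {m n : ℕ}
    (LS : EuclideanSpace ℝ (Fin m) × EuclideanSpace ℝ (Fin n) → ℝ)
    (LT : EuclideanSpace ℝ (Fin n) → ℝ)
    (ℓ ε η : ℝ) (hℓ : 0 < ℓ) (hε : 0 ≤ ε) (hη : 0 < η)
    (hLip : LipschitzWith (Real.toNNReal ℓ) (fun θ => gradient LT θ))
    (lam : EuclideanSpace ℝ (Fin m))
    (θS θT : ℕ → EuclideanSpace ℝ (Fin n))
    (h0 : θS 0 = θT 0)
    (hSrec : ∀ k, θS (k + 1) = θS k - η • gradient (fun θ => LS (lam, θ)) (θS k))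
    (hTrec : ∀ k, θT (k + 1) = θT k - η • gradient LT (θT k))
    (hmis : ∀ k, ‖gradient (fun θ => LS (lam, θ)) (θS k) - gradient LT (θS k)‖ ≤ ε) :
    ∀ k, ‖θS k - θT k‖ ≤ η * ε * ((1 + η * ℓ) ^ k - 1) / (η * ℓ) := by
  intro k
  induction k with
  | zero => simp [h0]
  | succ k ih =>
    set gS := gradient (fun θ => LS (lam, θ)) with hgS
    set gT := gradient LT with hgT
    have hdecomp : θS (k+1) - θT (k+1)
        = (θS k - θT k) - η • (gT (θS k) - gT (θT k)) - η • (gS (θS k) - gT (θS k)) := by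
      rw [hSrec, hTrec]
      simp only [smul_sub]
      abel
    have hLipd : ‖gT (θS k) - gT (θT k)‖ ≤ ℓ * ‖θS k - θT k‖ := by
      have := hLip.dist_le_mul (θS k) (θT k)
      rw [Real.coe_toNNReal _ hℓ.le] at this
      simpa [dist_eq_norm] using this
    have hbound : ‖θS (k+1) - θT (k+1)‖
        ≤ (1 + η * ℓ) * ‖θS k - θT k‖ + η * ε := by
      rw [hdecomp]
      calc ‖(θS k - θT k) - η • (gT (θS k) - gT (θT k)) - η • (gS (θS k) - gT (θS k))‖
          ≤ ‖(θS k - θT k) - η • (gT (θS k) - gT (θT k))‖ + ‖η • (gS (θS k) - gT (θS k))‖ :=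
            norm_sub_le _ _
        _ ≤ (‖θS k - θT k‖ + ‖η • (gT (θS k) - gT (θT k))‖) + ‖η • (gS (θS k) - gT (θS k))‖ := by
            gcongr; exact norm_sub_le _ _
        _ ≤ (‖θS k - θT k‖ + η * (ℓ * ‖θS k - θT k‖)) + η * ε := by
            rw [norm_smul, norm_smul, Real.norm_eq_abs, abs_of_pos hη]
            gcongr
            exact hmis k
        _ = (1 + η * ℓ) * ‖θS k - θT k‖ + η * ε := by ring
    have hηℓ : 0 < η * ℓ := mul_pos hη hℓ
    have h1 : (0:ℝ) < 1 + η * ℓ := by linarith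
    calc ‖θS (k+1) - θT (k+1)‖ ≤ (1 + η * ℓ) * ‖θS k - θT k‖ + η * ε := hbound
      _ ≤ (1 + η * ℓ) * (η * ε * ((1 + η * ℓ) ^ k - 1) / (η * ℓ)) + η * ε := by
          gcongr
      _ = η * ε * ((1 + η * ℓ) ^ (k+1) - 1) / (η * ℓ) := by
          field_simp
          ring
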